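/- arXiv:2410.07954 — 3 statements merged into one kernel-verified Lean document; each statement's English description precedes it below -/
import Mathlib

section
/- Let V be a finite type and E : V → V → Prop a strongly connected directed graph (for all v, u there is a walk from v to u) such that every out-degree is at most φ. Let P be a finite type of agents with cardinality k ≥ 1, and let A : P → V be an injective function (a valid configuration). Then for every natural number h, the set of injective functions A* : P → V with ∑ p, dist(A p, A* p) = h, where dist(v, u) denotes the least length of a walk from v to u, has cardinality at most (Nat.choose (h + k - 1) h) · φ^h. -/
/-- A walk of length `h` from `v` to `u` in the digraph `E`. -/
def IsWalk {V : Type*} (E : V → V → Prop) (h : ℕ) (v u : V) (w : Fin (h + 1) → V) : Prop :=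
  w 0 = v ∧ w ⟨h, Nat.lt_succ_self h⟩ = u ∧
    ∀ i : ℕ, ∀ hi : i < h, E (w ⟨i, Nat.lt_succ_of_lt hi⟩) (w ⟨i + 1, Nat.succ_lt_succ hi⟩)

/-- There exists a walk of length `h` from `v` to `u`. -/
def HasWalk {V : Type*} (E : V → V → Prop) (h : ℕ) (v u : V) : Prop :=
  ∃ w : Fin (h + 1) → V, IsWalk E h v u w

/-- The distance from `v` to `u`: the least length of a walk from `v` to `u`. -/
noncomputable def walkDist {V : Type*} (E : V → V → Prop) (v u : V) : ℕ :=
  sInf {h : ℕ | HasWalk E h v u}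

open Finset Classical in
/-- The number of endpoints of walks of length `d` from `v` is at most `φ ^ d`. -/
lemma reach_card_le {V : Type*} [Fintype V] (E : V → V → Prop) (φ : ℕ)
    (hdeg : ∀ v : V, {u : V | E v u}.ncard ≤ φ) (v : V) :
    ∀ d : ℕ, (Finset.univ.filter fun u => HasWalk E d v u).card ≤ φ ^ d := by
  intro d
  induction d with
  | zero =>
    have hsub : (Finset.univ.filter fun u => HasWalk E 0 v u) ⊆ {v} := by
      intro u hu
      simp only [mem_filter, mem_univ, true_and] at hu
      obtain ⟨w, h0, hl, _⟩ := hu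
      simp only [mem_singleton]
      rw [← hl, ← h0]
      exact congrArg w (Fin.ext (by simp))
    simpa using Finset.card_le_card hsub
  | succ d ih =>
    have hedge : ∀ m : V, (Finset.univ.filter fun u => E m u).card ≤ φ := by
      intro m
      have := hdeg m
      rw [Set.ncard_eq_toFinset_card'] at this
      simpa [Set.toFinset_setOf] using this
    have hsub : (Finset.univ.filter fun u => HasWalk E (d + 1) v u) ⊆
        (Finset.univ.filter fun u => HasWalk E d v u).biUnion
          (fun m => Finset.univ.filter fun u => E m u) := by
      intro u hu
      simp only [mem_filter, mem_univ, true_and] at hu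
      obtain ⟨w, h0, hl, he⟩ := hu
      simp only [mem_biUnion, mem_filter, mem_univ, true_and]
      refine ⟨w ⟨d, by omega⟩, ⟨fun i => w ⟨i.val, by omega⟩, ?_, ?_, ?_⟩, ?_⟩
      · exact h0
      · rfl
      · intro i hi
        exact he i (by omega)
      · have h2 := he d (Nat.lt_succ_self d)
        rwa [hl] at h2
    calc (Finset.univ.filter fun u => HasWalk E (d + 1) v u).card
        ≤ ((Finset.univ.filter fun u => HasWalk E d v u).biUnion
            (fun m => Finset.univ.filter fun u => E m u)).card := Finset.card_le_card hsub
      _ ≤ ∑ m ∈ Finset.univ.filter fun u => HasWalk E d v u,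
            (Finset.univ.filter fun u => E m u).card := Finset.card_biUnion_le
      _ ≤ ∑ _m ∈ Finset.univ.filter fun u => HasWalk E d v u, φ :=
            Finset.sum_le_sum fun m _ => hedge m
      _ = (Finset.univ.filter fun u => HasWalk E d v u).card * φ := by
            rw [Finset.sum_const, smul_eq_mul]
      _ ≤ φ ^ d * φ := Nat.mul_le_mul_right φ ih
      _ = φ ^ (d + 1) := (pow_succ φ d).symm

theorem config_sphere_sum_card_le {V P : Type*} [Fintype V] [Fintype P]
    (E : V → V → Prop) (φ : ℕ)
    (hconn : ∀ v u : V, ∃ h : ℕ, HasWalk E h v u)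
    (hdeg : ∀ v : V, {u : V | E v u}.ncard ≤ φ)
    (k : ℕ) (hk : Fintype.card P = k) (hk1 : 1 ≤ k)
    (A : P → V) (hA : Function.Injective A) (h : ℕ) :
    {A' : P → V | Function.Injective A' ∧ ∑ p, walkDist E (A p) (A' p) = h}.ncard
      ≤ Nat.choose (h + k - 1) h * φ ^ h := by
  classical
  rw [Set.ncard_eq_toFinset_card', Set.toFinset_setOf]
  set SF := Finset.univ.filter
    (fun A' : P → V => Function.Injective A' ∧ ∑ p, walkDist E (A p) (A' p) = h) with hSF
  set dvec : (P → V) → (P → ℕ) := fun A' p => walkDist E (A p) (A' p) with hdvec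
  set D := SF.image dvec with hD
  have hsum : ∀ d ∈ D, ∑ p, d p = h := by
    intro d hd
    rw [hD, Finset.mem_image] at hd
    obtain ⟨A', hA', rfl⟩ := hd
    rw [hSF, Finset.mem_filter] at hA'
    exact hA'.2.2
  have hsub : SF ⊆ D.biUnion
      (fun d => Finset.univ.filter fun A' : P → V => ∀ p, walkDist E (A p) (A' p) = d p) := by
    intro A' hA'
    rw [Finset.mem_biUnion]
    exact ⟨dvec A', Finset.mem_image_of_mem _ hA', by simp [hdvec]⟩
  have hfiber : ∀ d ∈ D,
      (Finset.univ.filter fun A' : P → V => ∀ p, walkDist E (A p) (A' p) = d p).card ≤ φ ^ h := by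
    intro d hd
    have hsubf : (Finset.univ.filter fun A' : P → V => ∀ p, walkDist E (A p) (A' p) = d p) ⊆
        Fintype.piFinset (fun p => Finset.univ.filter fun u => HasWalk E (d p) (A p) u) := by
      intro A' hA'
      simp only [Finset.mem_filter, Finset.mem_univ, true_and] at hA'
      simp only [Fintype.mem_piFinset, Finset.mem_filter, Finset.mem_univ, true_and]
      intro p
      have hne : {n : ℕ | HasWalk E n (A p) (A' p)}.Nonempty := hconn _ _
      have h2 : HasWalk E (walkDist E (A p) (A' p)) (A p) (A' p) := Nat.sInf_mem hne
      rwa [hA' p] at h2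
    calc (Finset.univ.filter fun A' : P → V => ∀ p, walkDist E (A p) (A' p) = d p).card
        ≤ (Fintype.piFinset
            (fun p => Finset.univ.filter fun u => HasWalk E (d p) (A p) u)).card :=
          Finset.card_le_card hsubf
      _ = ∏ p, (Finset.univ.filter fun u => HasWalk E (d p) (A p) u).card :=
          Fintype.card_piFinset _
      _ ≤ ∏ p, φ ^ d p :=
          Finset.prod_le_prod' fun p _ => reach_card_le E φ hdeg (A p) (d p)
      _ = φ ^ ∑ p, d p := Finset.prod_pow_eq_pow_sum _ _ _
      _ = φ ^ h := by rw [hsum d hd]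
  have hP : Nonempty P := Fintype.card_pos_iff.mp (by omega)
  obtain ⟨p0⟩ := hP
  have key : ∀ d : P → ℕ, ∀ q : P, Multiset.count q (∑ p, Multiset.replicate (d p) p) = d q := by
    intro d q
    rw [Multiset.count_sum']
    simp [Multiset.count_replicate]
  have hDcard : D.card ≤ (h + k - 1).choose h := by
    have hinj : D.card ≤ (Finset.univ : Finset (Sym P h)).card := by
      have hcardm : ∀ d : P → ℕ, ∑ p, d p = h →
          Multiset.card (∑ p, Multiset.replicate (d p) p) = h := by
        intro d hd
        rw [← hd]
        simp
      refine Finset.card_le_card_of_injOn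
        (fun d : P → ℕ => if hd : ∑ p, d p = h then
          (⟨∑ p, Multiset.replicate (d p) p, hcardm d hd⟩ : Sym P h)
          else Sym.replicate h p0) (fun _ _ => Finset.mem_univ _) ?_
      intro d1 h1 d2 h2 heq
      simp only [dif_pos (hsum d1 h1), dif_pos (hsum d2 h2)] at heq
      have hmul : (∑ p, Multiset.replicate (d1 p) p) = ∑ p, Multiset.replicate (d2 p) p :=
        by simpa [hsum d1 h1, hsum d2 h2] using Subtype.ext_iff.mp heq
      funext q
      rw [← key d1 q, ← key d2 q, hmul]
    have hcard : Fintype.card (Sym P h) = (h + k - 1).choose h := by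
      rw [Sym.card_sym_eq_choose, hk]
      congr 1
      omega
    rwa [Finset.card_univ, hcard] at hinj
  calc SF.card ≤ (D.biUnion
        (fun d => Finset.univ.filter fun A' : P → V =>
          ∀ p, walkDist E (A p) (A' p) = d p)).card := Finset.card_le_card hsub
    _ ≤ ∑ d ∈ D, (Finset.univ.filter fun A' : P → V =>
          ∀ p, walkDist E (A p) (A' p) = d p).card := Finset.card_biUnion_le
    _ ≤ ∑ _d ∈ D, φ ^ h := Finset.sum_le_sum hfiber
    _ = D.card * φ ^ h := by rw [Finset.sum_const, smul_eq_mul]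
    _ ≤ (h + k - 1).choose h * φ ^ h := Nat.mul_le_mul_right _ hDcard
end

section
/- Let V be a finite type with |V| = n and let P be a finite type of agents with |P| = k, where k ≤ n. Let A : P → V be an injective function (a valid configuration) and let r be a natural number with r ≤ k. Then the set of injective functions A* : P → V such that the number of agents p with A* p ≠ A p is at most r has cardinality at most (Nat.choose k r) · Nat.descFactorial (n - k + r) r, i.e., at most (k choose r) · (n-k+r)! / (n-k)!. -/
theorem agent_ball_card_le {V P : Type*} [Fintype V] [Fintype P]
    (n k : ℕ) (hn : Fintype.card V = n) (hk : Fintype.card P = k) (hkn : k ≤ n)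
    (A : P → V) (hA : Function.Injective A) (r : ℕ) (hr : r ≤ k) :
    {A' : P → V | Function.Injective A' ∧ {p : P | A' p ≠ A p}.ncard ≤ r}.ncard
      ≤ Nat.choose k r * Nat.descFactorial (n - k + r) r := by
  classical
  have harith : ∀ a b c : ℕ, c ≤ b → b ≤ a → a - (b - c) = a - b + c := by
    intro a b c h1 h2; omega
  set B : Finset (P → V) := Finset.univ.filter
    (fun A' => Function.Injective A' ∧ {p : P | A' p ≠ A p}.ncard ≤ r) with hB
  have hset : {A' : P → V | Function.Injective A' ∧ {p : P | A' p ≠ A p}.ncard ≤ r}.ncard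
      = B.card := by
    rw [Set.ncard_eq_toFinset_card']
    congr 1
    ext A'
    simp [hB]
  rw [hset]
  set FS : Finset P → Finset (P → V) := fun S => Finset.univ.filter
    (fun A' => Function.Injective A' ∧ ∀ p ∉ S, A' p = A p) with hFS
  have hsub : B ⊆ (Finset.powersetCard r Finset.univ).biUnion FS := by
    intro A' hA'
    simp only [hB, Finset.mem_filter] at hA'
    obtain ⟨-, hinj, hle⟩ := hA'
    set D : Finset P := Finset.univ.filter (fun p => A' p ≠ A p) with hD
    have hDcard : D.card ≤ r := by
      have heq : {p : P | A' p ≠ A p}.ncard = D.card := by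
        rw [Set.ncard_eq_toFinset_card']
        congr 1
        ext p
        simp [hD]
      rw [heq] at hle
      exact hle
    obtain ⟨S, hDS, -, hScard⟩ :=
      Finset.exists_subsuperset_card_eq (Finset.subset_univ D) hDcard
        (by rw [Finset.card_univ, hk]; exact hr)
    rw [Finset.mem_biUnion]
    refine ⟨S, by simp [Finset.mem_powersetCard, hScard], ?_⟩
    simp only [hFS, Finset.mem_filter]
    refine ⟨Finset.mem_univ _, hinj, fun p hp => ?_⟩
    by_contra hne
    exact hp (hDS (by simp [hD, hne]))
  have key : ∀ S ∈ Finset.powersetCard r Finset.univ,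
      (FS S).card ≤ Nat.descFactorial (n - k + r) r := by
    intro S hS
    rw [Finset.mem_powersetCard] at hS
    obtain ⟨-, hScard⟩ := hS
    set W : Finset V := (Sᶜ.image A)ᶜ with hW
    have hWcard : W.card = n - k + r := by
      rw [hW, Finset.card_compl, Finset.card_image_of_injective _ hA,
        Finset.card_compl, hScard, hn, hk]
      exact harith n k r hr hkn
    have hmemW : ∀ A' ∈ FS S, ∀ p ∈ S, A' p ∈ W := by
      intro A' hA' p hp
      simp only [hFS, Finset.mem_filter] at hA'
      obtain ⟨-, hinj, hout⟩ := hA'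
      rw [hW, Finset.mem_compl, Finset.mem_image]
      rintro ⟨q, hq, hqe⟩
      rw [Finset.mem_compl] at hq
      have : A' q = A' p := by rw [hout q hq, hqe]
      exact hq (hinj this ▸ hp)
    have hcard : (FS S).card ≤ Fintype.card (↥S ↪ ↥W) := by
      rw [← Fintype.card_coe (FS S)]
      have hmem' : ∀ (x : ↥(FS S)) (p : ↥S), (x : P → V) p.1 ∈ W := by
        rintro ⟨A', hA'⟩ ⟨p, hp⟩
        exact hmemW A' hA' p hp
      have hinj' : ∀ x : ↥(FS S), Function.Injective (x : P → V) := by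
        intro x
        have hx := x.2
        simp only [hFS, Finset.mem_filter] at hx
        exact hx.2.1
      have hout' : ∀ x : ↥(FS S), ∀ p ∉ S, (x : P → V) p = A p := by
        intro x
        have hx := x.2
        simp only [hFS, Finset.mem_filter] at hx
        exact hx.2.2
      refine Fintype.card_le_of_injective
        (fun x => ⟨fun p => ⟨(x : P → V) p.1, hmem' x p⟩, ?_⟩) ?_
      · rintro ⟨p, hp⟩ ⟨q, hq⟩ hpq
        exact Subtype.ext (hinj' x (congrArg Subtype.val hpq))
      · intro x y h
        refine Subtype.ext (funext fun p => ?_)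
        by_cases hp : p ∈ S
        · have := congrArg (fun e => ((e : ↥S ↪ ↥W) ⟨p, hp⟩ : V)) h
          exact this
        · rw [hout' x p hp, hout' y p hp]
    calc (FS S).card ≤ Fintype.card (↥S ↪ ↥W) := hcard
      _ = Nat.descFactorial W.card S.card := by
          rw [Fintype.card_embedding_eq, Fintype.card_coe, Fintype.card_coe]
      _ = Nat.descFactorial (n - k + r) r := by rw [hWcard, hScard]
  calc B.card ≤ ((Finset.powersetCard r Finset.univ).biUnion FS).card :=
        Finset.card_le_card hsub
    _ ≤ ∑ S ∈ Finset.powersetCard r Finset.univ, (FS S).card :=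
        Finset.card_biUnion_le
    _ ≤ (Finset.powersetCard r Finset.univ).card * Nat.descFactorial (n - k + r) r :=
        Finset.sum_le_card_nsmul _ _ _ key
    _ = Nat.choose k r * Nat.descFactorial (n - k + r) r := by
        rw [Finset.card_powersetCard, Finset.card_univ, hk]
end

section
/- Let V be a finite type with |V| = n and let P be a finite type of agents with |P| = k, where k ≤ n. Let m be a natural number, let F : Fin m → (P → V) be a family of injective configurations (the configurations crossed by a reference plan), and let r be a natural number with r ≤ k. Then the set of injective functions γ : P → V such that there exists j : Fin m with |{p ∈ P | γ p ≠ F j p}| ≤ r has cardinality at most m · (Nat.choose k r) · Nat.descFactorial (n - k + r) r. -/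
set_option maxHeartbeats 1000000

open Finset

theorem ball_card_le_aux {V P : Type*} [Fintype V] [Fintype P] [DecidableEq P] [DecidableEq V]
    (n k : ℕ) (hn : Fintype.card V = n) (hk : Fintype.card P = k) (hkn : k ≤ n)
    (f : P → V) (hf : Function.Injective f) (r : ℕ) (hr : r ≤ k) :
    {γ : P → V | Function.Injective γ ∧ {p : P | γ p ≠ f p}.ncard ≤ r}.ncard
      ≤ Nat.choose k r * Nat.descFactorial (n - k + r) r := by
  set B := {γ : P → V | Function.Injective γ ∧ {p : P | γ p ≠ f p}.ncard ≤ r} with hB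
  have hcardeq : ∀ γ : P → V,
      {p : P | γ p ≠ f p}.ncard = (Finset.univ.filter fun p => γ p ≠ f p).card := fun γ => by
    rw [Set.ncard_eq_toFinset_card', Set.toFinset_setOf]
  have hchoose : ∀ γ : ↥B, ∃ D : Finset P,
      (Finset.univ.filter fun p => (γ : P → V) p ≠ f p) ⊆ D ∧ D.card = r := by
    rintro ⟨γ, hinj, hle⟩
    obtain ⟨u, h1, _, h3⟩ := Finset.exists_subsuperset_card_eq (n := r)
      (Finset.subset_univ (Finset.univ.filter fun p => γ p ≠ f p))
      (hcardeq γ ▸ hle) (by rw [Finset.card_univ, hk]; exact hr)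
    exact ⟨u, h1, h3⟩
  choose D hD hDcard using hchoose
  have key : ∀ (γ : ↥B) (p : P), p ∈ D γ →
      (γ : P → V) p ∈ ((Finset.univ \ D γ).image f)ᶜ := by
    intro γ p hp
    rw [Finset.mem_compl]
    intro hmem
    obtain ⟨q, hq, hfq⟩ := Finset.mem_image.mp hmem
    have hqD : q ∉ D γ := (Finset.mem_sdiff.mp hq).2
    have hqfil : q ∉ (Finset.univ.filter fun p => (γ : P → V) p ≠ f p) :=
      fun h => hqD (hD γ h)
    have hq2 : (γ : P → V) q = f q := by
      by_contra h
      exact hqfil (Finset.mem_filter.mpr ⟨Finset.mem_univ q, h⟩)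
    have : p = q := γ.2.1 (by rw [hq2, hfq])
    rw [this] at hp
    exact hqD hp
  let Φ : ↥B → (Σ E : {E : Finset P // E.card = r},
      (↥(E.1) ↪ ↥((Finset.univ \ E.1).image f)ᶜ)) := fun γ =>
    ⟨⟨D γ, hDcard γ⟩,
      ⟨fun p => ⟨(γ : P → V) p.1, key γ p.1 p.2⟩,
        fun a b hab => Subtype.ext (γ.2.1 (congrArg Subtype.val hab))⟩⟩
  let Ψ : (Σ E : {E : Finset P // E.card = r},
      (↥(E.1) ↪ ↥((Finset.univ \ E.1).image f)ᶜ)) → (P → V) := fun t p =>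
    if h : p ∈ t.1.1 then (t.2 ⟨p, h⟩).1 else f p
  have hΨΦ : ∀ γ : ↥B, Ψ (Φ γ) = (γ : P → V) := by
    intro γ
    funext p
    by_cases h : p ∈ D γ
    · simp only [Ψ, Φ, dif_pos h, Function.Embedding.coeFn_mk]; rfl
    · simp only [Ψ, Φ, dif_neg h]
      by_contra hne
      exact h (hD γ (Finset.mem_filter.mpr ⟨Finset.mem_univ p, fun he => hne he.symm⟩))
  have hΦinj : Function.Injective Φ := by
    intro a b hab
    apply Subtype.ext
    rw [← hΨΦ a, ← hΨΦ b, hab]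
  have h1 : B.ncard ≤ Nat.card (Σ E : {E : Finset P // E.card = r},
      (↥(E.1) ↪ ↥((Finset.univ \ E.1).image f)ᶜ)) := by
    rw [← Nat.card_coe_set_eq]
    exact Nat.card_le_card_of_injective Φ hΦinj
  refine h1.trans (le_of_eq ?_)
  rw [Nat.card_eq_fintype_card, Fintype.card_sigma]
  have hterm : ∀ E : {E : Finset P // E.card = r},
      Fintype.card (↥(E.1) ↪ ↥((Finset.univ \ E.1).image f)ᶜ)
        = Nat.descFactorial (n - k + r) r := by
    intro E
    have h1 : Fintype.card ↥(E.1) = r := by rw [Fintype.card_coe, E.2]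
    have h2 : Fintype.card ↥((Finset.univ \ E.1).image f)ᶜ = n - k + r := by
      rw [Fintype.card_coe, Finset.card_compl, Finset.card_image_of_injective _ hf,
        Finset.card_sdiff_of_subset (Finset.subset_univ _)]
      simp only [Finset.card_univ, hn, hk, E.2]
      omega
    calc Fintype.card (↥(E.1) ↪ ↥((Finset.univ \ E.1).image f)ᶜ)
        = Fintype.card (Fin r ↪ Fin (n - k + r)) :=
          Fintype.card_congr (Equiv.embeddingCongr (Fintype.equivFinOfCardEq h1)
            (Fintype.equivFinOfCardEq h2))
      _ = Nat.descFactorial (n - k + r) r := by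
          rw [Fintype.card_embedding_eq, Fintype.card_fin, Fintype.card_fin]
  rw [Finset.sum_congr rfl fun E _ => hterm E, Finset.sum_const, Finset.card_univ,
    Fintype.card_finset_len, hk, smul_eq_mul]

theorem agent_plan_neighborhood_card_le {V P : Type*} [Fintype V] [Fintype P]
    (n k : ℕ) (hn : Fintype.card V = n) (hk : Fintype.card P = k) (hkn : k ≤ n)
    (m : ℕ) (F : Fin m → P → V) (hF : ∀ j : Fin m, Function.Injective (F j))
    (r : ℕ) (hr : r ≤ k) :
    {γ : P → V | Function.Injective γ ∧
        ∃ j : Fin m, {p : P | γ p ≠ F j p}.ncard ≤ r}.ncard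
      ≤ m * (Nat.choose k r * Nat.descFactorial (n - k + r) r) := by
  classical
  set S := {γ : P → V | Function.Injective γ ∧
      ∃ j : Fin m, {p : P | γ p ≠ F j p}.ncard ≤ r} with hS
  set Bj : Fin m → Set (P → V) :=
    fun j => {γ : P → V | Function.Injective γ ∧ {p : P | γ p ≠ F j p}.ncard ≤ r} with hBj
  have hSfin : S.Finite := S.toFinite
  have hBfin : ∀ j, (Bj j).Finite := fun j => (Bj j).toFinite
  have hsub : hSfin.toFinset ⊆ Finset.univ.biUnion fun j => (hBfin j).toFinset := by
    intro γ hγ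
    rw [Set.Finite.mem_toFinset] at hγ
    obtain ⟨hinj, j, hj⟩ := hγ
    exact Finset.mem_biUnion.mpr ⟨j, Finset.mem_univ j,
      (Set.Finite.mem_toFinset _).mpr ⟨hinj, hj⟩⟩
  calc S.ncard = hSfin.toFinset.card := Set.ncard_eq_toFinset_card _ hSfin
    _ ≤ (Finset.univ.biUnion fun j => (hBfin j).toFinset).card := Finset.card_le_card hsub
    _ ≤ ∑ j : Fin m, (hBfin j).toFinset.card := Finset.card_biUnion_le
    _ ≤ ∑ _j : Fin m, Nat.choose k r * Nat.descFactorial (n - k + r) r := by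
        refine Finset.sum_le_sum fun j _ => ?_
        rw [← Set.ncard_eq_toFinset_card _ (hBfin j)]
        exact ball_card_le_aux n k hn hk hkn (F j) (hF j) r hr
    _ = m * (Nat.choose k r * Nat.descFactorial (n - k + r) r) := by
        rw [Finset.sum_const, Finset.card_univ, Fintype.card_fin, smul_eq_mul]
end
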